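/- arXiv:1003.1488 — 4 statements merged into one kernel-verified Lean document; each statement's English description precedes it below -/
import Mathlib

section
/- For two density operators ρ₁, ρ₂ with apriori probabilities η₁, η₂ (η₁+η₂=1), the minimum over POVMs {E₁, E₂} (E₁, E₂ ≥ 0, E₁+E₂ = I) of the error probability 1 − η₁ tr(E₁ρ₁) − η₂ tr(E₂ρ₂) equals (1 − ‖η₁ρ₁ − η₂ρ₂‖₁)/2, where ‖·‖₁ is the trace norm. -/
/-! With `Δ = η₁ρ₁ - η₂ρ₂` and `E₂ = 1 - E₁`, the error probability is `η₁ - Re tr (E₁Δ)`.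
Splitting `Δ = Δ⁺ - Δ⁻` and using `tr (PQ) ≥ 0` for positive `P, Q` gives
`Re tr (E₁Δ) ≤ tr Δ⁺` whenever `0 ≤ E₁ ≤ 1`, with equality for the spectral projection of `Δ`
onto `[0, ∞)`. Finally `|Δ| + Δ = 2Δ⁺` turns `tr Δ⁺` into `(η₁ - η₂ + ‖Δ‖₁) / 2`. -/

open Matrix ComplexOrder Kronecker BigOperators

/-- Trace norm: tr|X| = tr √(Xᴴ X). -/
noncomputable def traceNorm {n : Type*} [Fintype n] [DecidableEq n] (X : Matrix n n ℂ) : ℝ :=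
  (((Matrix.posSemidef_conjTranspose_mul_self X).isHermitian.eigenvectorUnitary : Matrix n n ℂ) *
    diagonal (((↑) : ℝ → ℂ) ∘ (√·) ∘ (Matrix.posSemidef_conjTranspose_mul_self X).isHermitian.eigenvalues) *
    (star (Matrix.posSemidef_conjTranspose_mul_self X).isHermitian.eigenvectorUnitary :
      Matrix n n ℂ)).trace.re

open scoped MatrixOrder

namespace Matrix

variable {n 𝕜 : Type*} [Fintype n] [DecidableEq n] [RCLike 𝕜]

lemma trace_mul_nonneg {A B : Matrix n n 𝕜} (hA : 0 ≤ A) (hB : 0 ≤ B) : 0 ≤ (A * B).trace := by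
  have hs : IsSelfAdjoint (CFC.sqrt B) := (CFC.sqrt_nonneg B).isSelfAdjoint
  calc (0 : 𝕜) ≤ (star (CFC.sqrt B) * A * CFC.sqrt B).trace :=
        (nonneg_iff_posSemidef.mp (star_left_conjugate_nonneg hA _)).trace_nonneg
    _ = (A * B).trace := by
        rw [hs.star_eq, trace_mul_comm, ← mul_assoc, CFC.sqrt_mul_sqrt_self B hB, trace_mul_comm]

lemma re_trace_mul_le_re_trace_posPart {A E : Matrix n n 𝕜} (hA : IsSelfAdjoint A)
    (hE₀ : 0 ≤ E) (hE₁ : E ≤ 1) : RCLike.re (E * A).trace ≤ RCLike.re (A⁺).trace := by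
  have hpos : 0 ≤ RCLike.re ((1 - E) * A⁺).trace :=
    RCLike.nonneg_iff.mp (trace_mul_nonneg (sub_nonneg.mpr hE₁) (CFC.posPart_nonneg A)) |>.1
  have hneg : 0 ≤ RCLike.re (E * A⁻).trace :=
    RCLike.nonneg_iff.mp (trace_mul_nonneg hE₀ (CFC.negPart_nonneg A)) |>.1
  have hsplit : (E * A).trace = (A⁺).trace - ((1 - E) * A⁺).trace - (E * A⁻).trace := by
    conv_lhs => rw [← CFC.posPart_sub_negPart A]
    rw [mul_sub, sub_mul, one_mul, trace_sub, trace_sub]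
    ring
  rw [hsplit, map_sub, map_sub]
  linarith

lemma exists_mul_eq_posPart {A : Matrix n n 𝕜} (hA : IsSelfAdjoint A) :
    ∃ E, 0 ≤ E ∧ E ≤ 1 ∧ E * A = A⁺ := by
  have hcont : ∀ f : ℝ → ℝ, ContinuousOn f (spectrum ℝ A) :=
    fun f => (Matrix.finite_real_spectrum (A := A)).continuousOn f
  refine ⟨cfc (fun x : ℝ => if 0 ≤ x then 1 else 0) A, cfc_nonneg fun x _ => ?_,
    cfc_le_one _ _ fun x _ => ?_, ?_⟩
  · split_ifs <;> norm_num
  · split_ifs <;> norm_num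
  · nth_rewrite 2 [← cfc_id' ℝ A]
    rw [← cfc_mul _ _ A (hcont _) (hcont _), CFC.posPart_def, cfcₙ_eq_cfc]
    congr 1
    funext x
    split_ifs with h
    · simp [posPart_eq_self.mpr h]
    · simp [posPart_eq_zero.mpr (not_le.mp h).le]

lemma traceNorm_eq_re_trace_abs (X : Matrix n n ℂ) : traceNorm X = (CFC.abs X).trace.re := by
  have h0 : (0 : Matrix n n ℂ) ≤ Xᴴ * X := (posSemidef_conjTranspose_mul_self X).nonneg
  rw [CFC.abs, star_eq_conjTranspose, CFC.sqrt_eq_real_sqrt _ h0, cfcₙ_eq_cfc (hf0 := by simp),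
    (posSemidef_conjTranspose_mul_self X).isHermitian.cfc_eq, IsHermitian.cfc,
    Unitary.conjStarAlgAut_apply]
  rfl

lemma re_trace_posPart {A : Matrix n n ℂ} (hA : IsSelfAdjoint A) :
    (A⁺).trace.re = (A.trace.re + traceNorm A) / 2 := by
  have h := congrArg (fun M : Matrix n n ℂ => M.trace.re) (CFC.abs_add_self A)
  simp only [two_nsmul, trace_add, Complex.add_re] at h
  rw [traceNorm_eq_re_trace_abs]
  linarith

lemma one_sub_re_trace_mul_of_add_eq_one {E₁ E₂ ρ₁ ρ₂ : Matrix n n ℂ} (η₁ η₂ : ℝ)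
    (hE : E₁ + E₂ = 1) (htr₂ : ρ₂.trace = 1) :
    1 - η₁ * (E₁ * ρ₁).trace.re - η₂ * (E₂ * ρ₂).trace.re =
      1 - η₂ - (E₁ * ((η₁ : ℂ) • ρ₁ - (η₂ : ℂ) • ρ₂)).trace.re := by
  have hΔ : (E₁ * ((η₁ : ℂ) • ρ₁ - (η₂ : ℂ) • ρ₂)).trace.re =
      η₁ * (E₁ * ρ₁).trace.re - η₂ * (E₁ * ρ₂).trace.re := by
    simp [mul_sub, trace_sub]
  have hE₂ : ((1 - E₁) * ρ₂).trace.re = 1 - (E₁ * ρ₂).trace.re := by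
    simp [sub_mul, trace_sub, htr₂]
  rw [eq_sub_of_add_eq' hE, hΔ, hE₂]
  ring

end Matrix

theorem stmt2_general {d : ℕ} (ρ₁ ρ₂ : Matrix (Fin d) (Fin d) ℂ)
    (hρ₁ : ρ₁.PosSemidef) (hρ₂ : ρ₂.PosSemidef)
    (htr₁ : ρ₁.trace = 1) (htr₂ : ρ₂.trace = 1)
    (η₁ η₂ : ℝ) (hsum : η₁ + η₂ = 1) :
    IsLeast {x : ℝ | ∃ E₁ E₂ : Matrix (Fin d) (Fin d) ℂ,
        E₁.PosSemidef ∧ E₂.PosSemidef ∧ E₁ + E₂ = 1 ∧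
        x = 1 - η₁ * ((E₁ * ρ₁).trace).re - η₂ * ((E₂ * ρ₂).trace).re}
      ((1 - traceNorm ((η₁ : ℂ) • ρ₁ - (η₂ : ℂ) • ρ₂)) / 2) := by
  set Δ := (η₁ : ℂ) • ρ₁ - (η₂ : ℂ) • ρ₂
  have hΔ : IsSelfAdjoint Δ :=
    (IsSelfAdjoint.smul (Complex.conj_ofReal η₁) hρ₁.isHermitian).sub
      (IsSelfAdjoint.smul (Complex.conj_ofReal η₂) hρ₂.isHermitian)
  have hopt : (Δ⁺).trace.re = (η₁ - η₂ + traceNorm Δ) / 2 := by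
    have htrΔ : Δ.trace.re = η₁ - η₂ := by simp [Δ, trace_sub, htr₁, htr₂]
    rw [re_trace_posPart hΔ, htrΔ]
  constructor
  · obtain ⟨E, hE₀, hE₁, hEΔ⟩ := exists_mul_eq_posPart hΔ
    refine ⟨E, 1 - E, nonneg_iff_posSemidef.mp hE₀, hE₁, add_sub_cancel _ _, ?_⟩
    rw [one_sub_re_trace_mul_of_add_eq_one η₁ η₂ (add_sub_cancel _ _) htr₂, hEΔ, hopt]
    linarith
  · rintro x ⟨E₁, E₂, hE₁, hE₂, hE, rfl⟩
    have hle := re_trace_mul_le_re_trace_posPart hΔ (nonneg_iff_posSemidef.mpr hE₁)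
      (le_iff.mpr (eq_sub_of_add_eq' hE ▸ hE₂))
    rw [one_sub_re_trace_mul_of_add_eq_one η₁ η₂ hE htr₂]
    simp only [RCLike.re_to_complex] at hle
    linarith

theorem stmt2 {d : ℕ} (ρ₁ ρ₂ : Matrix (Fin d) (Fin d) ℂ)
    (hρ₁ : ρ₁.PosSemidef) (hρ₂ : ρ₂.PosSemidef)
    (htr₁ : ρ₁.trace = 1) (htr₂ : ρ₂.trace = 1)
    (η₁ η₂ : ℝ) (hη₁ : 0 ≤ η₁) (hη₂ : 0 ≤ η₂) (hsum : η₁ + η₂ = 1) :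
    IsLeast {x : ℝ | ∃ E₁ E₂ : Matrix (Fin d) (Fin d) ℂ,
        E₁.PosSemidef ∧ E₂.PosSemidef ∧ E₁ + E₂ = 1 ∧
        x = 1 - η₁ * ((E₁ * ρ₁).trace).re - η₂ * ((E₂ * ρ₂).trace).re}
      ((1 - traceNorm ((η₁ : ℂ) • ρ₁ - (η₂ : ℂ) • ρ₂)) / 2) :=
  stmt2_general ρ₁ ρ₂ hρ₁ hρ₂ htr₁ htr₂ η₁ η₂ hsum
end

section
/- Two unitary channels U·U† and V·V† on a d-dimensional Hilbert space can be perfectly discriminated with a single use (possibly with an entangled test state) if and only if 0 lies in the convex hull of the eigenvalues of U†V, i.e., if and only if min over density operators ξ of |tr(ξ U†V)| = 0. -/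
/-!
Writing `ρ` for the reduced state of `ψ` on the second factor, one has
`⟪(1 ⊗ U) ψ, (1 ⊗ V) ψ⟫ = tr (ρ U†V)` and `tr ρ = ‖ψ‖²`, so a perfectly discriminating `ψ` yields
the density matrix `ρ`. Conversely every density matrix factors as `ξ = B B†`, and it is the reduced
state of the vector whose coefficient matrix is `B`.
-/

open Matrix ComplexOrder Kronecker

namespace Matrix

variable {ι n R : Type*} [Fintype ι]

/-- The partial trace of `|ψ⟩⟨ψ|` over the first factor `R^ι`. -/
def reducedState [Semiring R] [StarRing R] (ψ : ι × n → R) : Matrix n n R :=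
  of fun a b => ∑ i, ψ (i, a) * star (ψ (i, b))

section CommSemiring

variable [CommSemiring R] [StarRing R]

theorem reducedState_eq_mul_conjTranspose (B : Matrix n ι R) :
    reducedState (fun p : ι × n => B p.2 p.1) = B * Bᴴ := by
  ext a b
  simp [reducedState, mul_apply]

theorem trace_reducedState [Fintype n] (ψ : ι × n → R) : (reducedState ψ).trace = star ψ ⬝ᵥ ψ := by
  simp only [trace, diag, reducedState, of_apply, dotProduct, Pi.star_apply, Fintype.sum_prod_type]
  rw [Finset.sum_comm]
  exact Finset.sum_congr rfl fun _ _ => Finset.sum_congr rfl fun _ _ => mul_comm _ _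

theorem star_dotProduct_one_kronecker_mulVec [Fintype n] [DecidableEq ι] (ψ : ι × n → R)
    (W : Matrix n n R) :
    star ψ ⬝ᵥ ((1 : Matrix ι ι R) ⊗ₖ W) *ᵥ ψ = (reducedState ψ * W).trace := by
  have lhs : star ψ ⬝ᵥ ((1 : Matrix ι ι R) ⊗ₖ W) *ᵥ ψ
      = ∑ i, ∑ a, ∑ b, star (ψ (i, a)) * W a b * ψ (i, b) := by
    simp [dotProduct, mulVec, one_apply, Fintype.sum_prod_type, Finset.mul_sum, ite_mul, mul_assoc]
  have rhs : (reducedState ψ * W).trace = ∑ a, ∑ b, ∑ i, star (ψ (i, b)) * W b a * ψ (i, a) := by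
    simp only [trace, diag, mul_apply, reducedState, of_apply, Finset.sum_mul]
    exact Finset.sum_congr rfl fun _ _ => Finset.sum_congr rfl fun _ _ =>
      Finset.sum_congr rfl fun _ _ => by ring
  rw [lhs, rhs, Finset.sum_comm]
  conv_rhs => rw [Finset.sum_comm]
  exact Finset.sum_congr rfl fun _ _ => Finset.sum_comm

theorem star_one_kronecker_mulVec_dotProduct_one_kronecker_mulVec [Fintype n] [DecidableEq ι]
    (ψ : ι × n → R) (U V : Matrix n n R) :
    star (((1 : Matrix ι ι R) ⊗ₖ U) *ᵥ ψ) ⬝ᵥ ((1 : Matrix ι ι R) ⊗ₖ V) *ᵥ ψ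
      = (reducedState ψ * (Uᴴ * V)).trace := by
  rw [star_mulVec, dotProduct_mulVec, vecMul_vecMul, conjTranspose_kronecker, conjTranspose_one,
    ← mul_kronecker_mul, one_mul, ← dotProduct_mulVec, star_dotProduct_one_kronecker_mulVec]

end CommSemiring

theorem posSemidef_reducedState [Fintype n] [CommRing R] [PartialOrder R] [StarRing R]
    [StarOrderedRing R] (ψ : ι × n → R) : (reducedState ψ).PosSemidef :=
  reducedState_eq_mul_conjTranspose (of fun a i => ψ (i, a)) ▸ posSemidef_self_mul_conjTranspose _

theorem PosSemidef.exists_eq_mul_conjTranspose {𝕜 : Type*} [RCLike 𝕜] [Fintype n] [DecidableEq n]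
    {A : Matrix n n 𝕜} (hA : A.PosSemidef) : ∃ B : Matrix n n 𝕜, A = B * Bᴴ := by
  open scoped MatrixOrder Matrix.Norms.L2Operator in
  exact CStarAlgebra.nonneg_iff_eq_mul_star_self.mp hA.nonneg

end Matrix

theorem stmt12_general {d : ℕ} (U V : Matrix (Fin d) (Fin d) ℂ) :
    (∃ ψ : Fin d × Fin d → ℂ, star ψ ⬝ᵥ ψ = 1 ∧
        star (((1 : Matrix (Fin d) (Fin d) ℂ) ⊗ₖ U).mulVec ψ) ⬝ᵥ
          ((1 : Matrix (Fin d) (Fin d) ℂ) ⊗ₖ V).mulVec ψ = 0) ↔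
      (∃ ξ : Matrix (Fin d) (Fin d) ℂ, ξ.PosSemidef ∧ ξ.trace = 1 ∧
        (ξ * (Uᴴ * V)).trace = 0) := by
  constructor
  · rintro ⟨ψ, hnorm, horth⟩
    refine ⟨reducedState ψ, posSemidef_reducedState ψ, ?_, ?_⟩
    · rw [trace_reducedState, hnorm]
    · rw [← star_one_kronecker_mulVec_dotProduct_one_kronecker_mulVec, horth]
  · rintro ⟨ξ, hξ, htrace, horth⟩
    obtain ⟨B, rfl⟩ := hξ.exists_eq_mul_conjTranspose
    refine ⟨fun p => B p.2 p.1, ?_, ?_⟩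
    · rw [← trace_reducedState, reducedState_eq_mul_conjTranspose, htrace]
    · rw [star_one_kronecker_mulVec_dotProduct_one_kronecker_mulVec,
        reducedState_eq_mul_conjTranspose, horth]

theorem stmt12 {d : ℕ} (U V : Matrix (Fin d) (Fin d) ℂ)
    (hU : U ∈ Matrix.unitaryGroup (Fin d) ℂ) (hV : V ∈ Matrix.unitaryGroup (Fin d) ℂ) :
    (∃ ψ : Fin d × Fin d → ℂ, star ψ ⬝ᵥ ψ = 1 ∧
        star (((1 : Matrix (Fin d) (Fin d) ℂ) ⊗ₖ U).mulVec ψ) ⬝ᵥ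
          ((1 : Matrix (Fin d) (Fin d) ℂ) ⊗ₖ V).mulVec ψ = 0) ↔
      (∃ ξ : Matrix (Fin d) (Fin d) ℂ, ξ.PosSemidef ∧ ξ.trace = 1 ∧
        (ξ * (Uᴴ * V)).trace = 0) :=
  stmt12_general U V
end

section
/- For unitary operators U, V on a 2-dimensional Hilbert space, the minimum over density operators ξ of |tr(ξ U†V)| equals ½|tr(U†V)|, provided the two eigenvalues e^{iθ_1}, e^{iθ_2} of U†V satisfy that 0 is not in their convex hull (which for two points on the unit circle fails only when they are antipodal, where both sides equal 0). In all cases the minimum equals ½|e^{iθ_1} + e^{iθ_2}| = ½|tr(U†V)|. -/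
open Matrix ComplexOrder

/-!
Diagonalize the density operator, `ξ = P diag(d₀, d₁) P⋆` with `d₀ + d₁ = 1`, and put
`M = P⋆ (U⋆V) P`. Then `tr(ξ U⋆V) = d₀ M₀₀ + d₁ M₁₁` and `tr(U⋆V) = M₀₀ + M₁₁`, and since `M` is a
`2 × 2` unitary its diagonal entries have equal modulus. For `‖a‖ = ‖b‖` the vectors `a + b` and
`a - b` are orthogonal, so `d₀ a + d₁ b = (a + b)/2 + ((d₀ - d₁)/2) (a - b)` has norm at least
`‖a + b‖/2`. The bound is attained at the maximally mixed state `ξ = 1/2`.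
-/

theorem norm_add_div_two_le_norm_smul_add_smul {E : Type*} [NormedAddCommGroup E]
    [InnerProductSpace ℝ E] {a b : E} (hab : ‖a‖ = ‖b‖) {p q : ℝ} (hpq : p + q = 1) :
    ‖a + b‖ / 2 ≤ ‖p • a + q • b‖ := by
  have horth : inner ℝ ((1 / 2 : ℝ) • (a + b)) (((p - q) / 2) • (a - b)) = 0 := by
    rw [real_inner_smul_left, real_inner_smul_right, (real_inner_add_sub_eq_zero_iff a b).2 hab]
    simp
  have hdecomp : p • a + q • b = (1 / 2 : ℝ) • (a + b) + ((p - q) / 2) • (a - b) := by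
    rw [show q = 1 - p by linarith]
    module
  have hsq : ‖(1 / 2 : ℝ) • (a + b)‖ ^ 2 ≤ ‖p • a + q • b‖ ^ 2 := by
    rw [hdecomp, norm_add_pow_two_real, horth]
    nlinarith [sq_nonneg ‖((p - q) / 2) • (a - b)‖]
  rw [pow_le_pow_iff_left₀ (norm_nonneg _) (norm_nonneg _) two_ne_zero, norm_smul] at hsq
  simpa [div_eq_inv_mul] using hsq

namespace Matrix

variable {𝕜 : Type*} [RCLike 𝕜] {n : Type*} [Fintype n] [DecidableEq n]

theorem trace_unitary_conj {P : Matrix n n 𝕜} (hP : P ∈ unitaryGroup n 𝕜) (B : Matrix n n 𝕜) :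
    (star P * B * P).trace = B.trace := by
  rw [trace_mul_cycle, mem_unitaryGroup_iff.mp hP, one_mul]

theorem IsHermitian.trace_mul_eq_sum_eigenvalues_mul {A : Matrix n n 𝕜} (hA : A.IsHermitian)
    (B : Matrix n n 𝕜) :
    (A * B).trace = ∑ i, (hA.eigenvalues i : 𝕜) *
      (star (hA.eigenvectorUnitary : Matrix n n 𝕜) * B * hA.eigenvectorUnitary) i i := by
  conv_lhs => rw [hA.spectral_theorem, Unitary.conjStarAlgAut_apply]
  rw [Matrix.mul_assoc, Matrix.mul_assoc, trace_mul_comm, Matrix.mul_assoc]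
  simp [trace, diagonal_mul]

theorem norm_apply_zero_zero_eq_norm_apply_one_one {M : Matrix (Fin 2) (Fin 2) 𝕜}
    (hM : M ∈ unitaryGroup (Fin 2) 𝕜) : ‖M 0 0‖ = ‖M 1 1‖ := by
  have hrow := congrFun (congrFun (mem_unitaryGroup_iff.mp hM) 0) 0
  have hcol := congrFun (congrFun (mem_unitaryGroup_iff'.mp hM) 1) 1
  simp only [mul_apply, Fin.sum_univ_two, star_apply, RCLike.star_def, RCLike.mul_conj,
    RCLike.conj_mul, one_apply_eq] at hrow hcol
  have hsq : ((‖M 0 0‖ ^ 2 : ℝ) : 𝕜) = ((‖M 1 1‖ ^ 2 : ℝ) : 𝕜) := by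
    push_cast
    linear_combination hrow - hcol
  exact (pow_left_inj₀ (norm_nonneg _) (norm_nonneg _) two_ne_zero).1
    (RCLike.ofReal_injective hsq)

theorem norm_trace_div_two_le_norm_trace_mul {ξ W : Matrix (Fin 2) (Fin 2) ℂ}
    (hξ : ξ.IsHermitian) (htr : ξ.trace = 1) (hW : W ∈ unitaryGroup (Fin 2) ℂ) :
    ‖W.trace‖ / 2 ≤ ‖(ξ * W).trace‖ := by
  set P : Matrix (Fin 2) (Fin 2) ℂ := ↑hξ.eigenvectorUnitary
  have hP : P ∈ unitaryGroup (Fin 2) ℂ := hξ.eigenvectorUnitary.2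
  have hM : star P * W * P ∈ unitaryGroup (Fin 2) ℂ :=
    mul_mem (mul_mem (Unitary.star_mem hP) hW) hP
  have hsum : hξ.eigenvalues 0 + hξ.eigenvalues 1 = 1 := by
    rw [hξ.trace_eq_sum_eigenvalues, Fin.sum_univ_two] at htr
    exact RCLike.ofReal_injective (K := ℂ) (by simpa using htr)
  have key := norm_add_div_two_le_norm_smul_add_smul
    (norm_apply_zero_zero_eq_norm_apply_one_one hM) hsum
  rw [Complex.real_smul, Complex.real_smul] at key
  rwa [hξ.trace_mul_eq_sum_eigenvalues_mul, ← trace_unitary_conj hP W, trace_fin_two,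
    Fin.sum_univ_two]

end Matrix

theorem stmt13 (U V : Matrix (Fin 2) (Fin 2) ℂ)
    (hU : U ∈ Matrix.unitaryGroup (Fin 2) ℂ) (hV : V ∈ Matrix.unitaryGroup (Fin 2) ℂ) :
    IsLeast {x : ℝ | ∃ ξ : Matrix (Fin 2) (Fin 2) ℂ,
        ξ.PosSemidef ∧ ξ.trace = 1 ∧ x = ‖(ξ * (Uᴴ * V)).trace‖}
      (‖(Uᴴ * V).trace‖ / 2) := by
  have hW : Uᴴ * V ∈ unitaryGroup (Fin 2) ℂ := mul_mem (Unitary.star_mem hU) hV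
  refine ⟨⟨(1 / 2 : ℂ) • 1, ?_, ?_, ?_⟩, ?_⟩
  · exact PosSemidef.one.smul (by rw [Complex.le_def]; norm_num)
  · simp [trace_smul]
  · rw [Matrix.smul_mul, Matrix.one_mul, trace_smul, norm_smul]
    norm_num
    ring
  · rintro x ⟨ξ, hξ, htr, rfl⟩
    exact norm_trace_div_two_le_norm_trace_mul hξ.isHermitian htr hW
end

section
/- Let ψ_U, ψ_V be unit vectors with overlap γ = |⟨ψ_U|ψ_V⟩| < 1, and η_U ≥ η_V > 0 with η_U + η_V = 1. The maximal success probability of unambiguous discrimination (over effects F_U, F_V ≥ 0 with F_U + F_V ≤ I, ⟨ψ_V|F_U|ψ_V⟩ = ⟨ψ_U|F_V|ψ_U⟩ = 0) satisfies: the failure probability equals 2√(η_Uη_V)γ if γ ≤ √(η_V/η_U), and equals η_V + η_U γ² if γ ≥ √(η_V/η_U). -/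
/-
Write `A = 1 - ⟨ψU|FU|ψU⟩` and `B = 1 - ⟨ψV|FV|ψV⟩`, so that the failure probability is
`ηU A + ηV B`. The no-error conditions force `FU ψV = 0` and `FV ψU = 0`, hence the Gram matrix
of the inconclusive effect `1 - FU - FV` on `(ψU, ψV)` is `[[A, ⟨ψU|ψV⟩], [⟨ψV|ψU⟩, B]]`, and its
positivity gives `γ² ≤ A B`. Conversely every `(A, B) ∈ [0,1]²` with `γ² ≤ A B` is attained by
`FU`, `FV` proportional to the projections onto the component of `ψU` orthogonal to `ψV` and the
component of `ψV` orthogonal to `ψU`; positivity of `1 - FU - FV` is checked in the orthonormal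
frame of `ψV` and the first of these components, by Bessel's inequality.

What remains is to minimise `ηU A + ηV B` over that region. By AM-GM the minimum is
`2 √(ηU ηV) γ`, attained at `A = γ √(ηV/ηU)`, `B = γ √(ηU/ηV)` as long as `B ≤ 1`, i.e.
`γ ≤ √(ηV/ηU)`; otherwise it is attained on the edge `B = 1` at `A = γ²`.
-/

open Matrix ComplexOrder

theorem Matrix.PosSemidef.norm_sq_apply_le {ι : Type*} {A : Matrix ι ι ℂ} (hA : A.PosSemidef)
    (i j : ι) : ‖A i j‖ ^ 2 ≤ (A i i).re * (A j j).re := by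
  have hdet := (hA.submatrix ![i, j]).det_nonneg
  have hii := Complex.nonneg_iff.mp (hA.diag_nonneg (i := i))
  have hji : A j i = star (A i j) := (hA.1.apply j i).symm
  rw [det_fin_two] at hdet
  simp only [submatrix_apply, Matrix.cons_val_zero, Matrix.cons_val_one, hji] at hdet
  have := (Complex.nonneg_iff.mp hdet).1
  simp only [Complex.sub_re, Complex.mul_re, ← hii.2, Complex.star_def, Complex.mul_conj,
    Complex.ofReal_re] at this
  rw [← Complex.normSq_eq_norm_sq]
  linarith

section
variable {ι : Type*} [Fintype ι]

theorem Matrix.PosSemidef.norm_sq_dotProduct_mulVec_le {Q : Matrix ι ι ℂ} (hQ : Q.PosSemidef)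
    (u v : ι → ℂ) :
    ‖star u ⬝ᵥ Q *ᵥ v‖ ^ 2 ≤ (star u ⬝ᵥ Q *ᵥ u).re * (star v ⬝ᵥ Q *ᵥ v).re := by
  let B : Matrix ι (Fin 2) ℂ := of fun k l => ![u, v] l k
  have hB : ∀ i j, (Bᴴ * Q * B) i j = star (![u, v] i) ⬝ᵥ Q *ᵥ ![u, v] j := by
    intro i j
    simp only [B, Matrix.mul_apply, conjTranspose_apply, of_apply, mulVec, dotProduct,
      Finset.mul_sum, Finset.sum_mul, mul_assoc, Pi.star_apply]
    exact Finset.sum_comm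
  simpa [hB] using (hQ.conjTranspose_mul_mul_same B).norm_sq_apply_le 0 1

theorem star_dotProduct_vecMulVec_mulVec (v x : ι → ℂ) :
    star x ⬝ᵥ vecMulVec v (star v) *ᵥ x = (‖star v ⬝ᵥ x‖ ^ 2 : ℝ) := by
  rw [vecMulVec_mulVec, dotProduct_smul, MulOpposite.smul_eq_mul_unop, MulOpposite.unop_op,
    star_dotProduct x v, Complex.star_def, Complex.conj_mul', Complex.ofReal_pow]

theorem star_dotProduct_smul_vecMulVec_mulVec (c : ℝ) (v x : ι → ℂ) :
    star x ⬝ᵥ (c • vecMulVec v (star v)) *ᵥ x = ((c * ‖star v ⬝ᵥ x‖ ^ 2 : ℝ) : ℂ) := by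
  rw [smul_mulVec, dotProduct_smul, star_dotProduct_vecMulVec_mulVec, Complex.real_smul,
    Complex.ofReal_mul]

theorem Matrix.posSemidef_one_sub_of_re_le [DecidableEq ι] {M : Matrix ι ι ℂ} (hM : M.IsHermitian)
    (h : ∀ x, (star x ⬝ᵥ M *ᵥ x).re ≤ (star x ⬝ᵥ x).re) : (1 - M).PosSemidef := by
  refine .of_dotProduct_mulVec_nonneg (isHermitian_one.sub hM) fun x => ?_
  rw [Complex.nonneg_iff]
  refine ⟨?_, ((isHermitian_one.sub hM).im_star_dotProduct_mulVec_self x).symm⟩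
  simpa [sub_mulVec, dotProduct_sub] using h x

theorem norm_star_dotProduct_comm (u v : ι → ℂ) : ‖star u ⬝ᵥ v‖ = ‖star v ⬝ᵥ u‖ := by
  rw [star_dotProduct, norm_star]

def perpComponent (v u : ι → ℂ) : ι → ℂ := u - (star v ⬝ᵥ u) • v

theorem star_perpComponent_dotProduct (v u x : ι → ℂ) :
    star (perpComponent v u) ⬝ᵥ x = star u ⬝ᵥ x - (star u ⬝ᵥ v) * (star v ⬝ᵥ x) := by
  rw [perpComponent, star_sub, star_smul, sub_dotProduct, smul_dotProduct, smul_eq_mul,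
    star_dotProduct v u, star_star]

theorem star_perpComponent_dotProduct_self (v u : ι → ℂ) :
    star (perpComponent v u) ⬝ᵥ u = star u ⬝ᵥ u - (‖star v ⬝ᵥ u‖ ^ 2 : ℝ) := by
  rw [star_perpComponent_dotProduct, star_dotProduct u v, Complex.star_def, Complex.conj_mul',
    Complex.ofReal_pow]

theorem norm_star_perpComponent_dotProduct_le {u v : ι → ℂ} (huv : ‖star u ⬝ᵥ v‖ ≤ 1)
    (x : ι → ℂ) :
    ‖star (perpComponent u v) ⬝ᵥ x‖ ≤ (1 - ‖star u ⬝ᵥ v‖ ^ 2) * ‖star v ⬝ᵥ x‖ +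
      ‖star u ⬝ᵥ v‖ * ‖star (perpComponent v u) ⬝ᵥ x‖ := by
  have h : star (perpComponent u v) ⬝ᵥ x = ((1 - ‖star u ⬝ᵥ v‖ ^ 2 : ℝ) : ℂ) * (star v ⬝ᵥ x)
      - star (star u ⬝ᵥ v) * star (perpComponent v u) ⬝ᵥ x := by
    rw [star_perpComponent_dotProduct, star_perpComponent_dotProduct, Complex.ofReal_sub,
      Complex.ofReal_one, Complex.ofReal_pow, ← Complex.conj_mul', ← Complex.star_def,
      ← star_dotProduct]
    ring
  rw [h]
  refine (norm_sub_le _ _).trans_eq ?_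
  rw [norm_mul, norm_mul, norm_star, Complex.norm_real,
    Real.norm_of_nonneg (by nlinarith [norm_nonneg (star u ⬝ᵥ v)])]

section
variable {v : ι → ℂ} (hv : star v ⬝ᵥ v = 1)
include hv

theorem star_perpComponent_dotProduct_eq_zero (u : ι → ℂ) : star (perpComponent v u) ⬝ᵥ v = 0 := by
  rw [star_perpComponent_dotProduct, hv, mul_one, sub_self]

theorem star_perpComponent_dotProduct_perpComponent (u : ι → ℂ) :
    star (perpComponent v u) ⬝ᵥ perpComponent v u = star u ⬝ᵥ u - (‖star v ⬝ᵥ u‖ ^ 2 : ℝ) := by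
  nth_rw 2 [perpComponent]
  rw [dotProduct_sub, dotProduct_smul, star_perpComponent_dotProduct_eq_zero hv, smul_zero,
    sub_zero, star_perpComponent_dotProduct_self]

theorem norm_sq_dotProduct_le_of_orthogonal [DecidableEq ι] {f : ι → ℂ} (hfv : star f ⬝ᵥ v = 0)
    (x : ι → ℂ) :
    ‖star f ⬝ᵥ x‖ ^ 2 ≤ (star f ⬝ᵥ f).re * ((star x ⬝ᵥ x).re - ‖star v ⬝ᵥ x‖ ^ 2) := by
  have hfx : star f ⬝ᵥ perpComponent v x = star f ⬝ᵥ x := by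
    rw [perpComponent, dotProduct_sub, dotProduct_smul, hfv, smul_zero, sub_zero]
  have := PosSemidef.one.norm_sq_dotProduct_mulVec_le f (perpComponent v x)
  simp only [one_mulVec] at this
  rwa [hfx, star_perpComponent_dotProduct_perpComponent hv,
    Complex.sub_re, Complex.ofReal_re] at this

end

end

/- With `u, v, w = |⟨ψV|x⟩|, |⟨f|x⟩|, |⟨g|x⟩|` and `X = ‖x‖²`, where `f`, `g` are the components
of `ψU`, `ψV` orthogonal to `ψV`, `ψU`, this is the positivity of `1 - FU - FV` at `x`. -/
theorem weighted_sq_add_le_of_bessel {γ A B : ℝ} (hγ0 : 0 ≤ γ) (hγ1 : γ < 1)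
    (hA : A ∈ Set.Icc (0 : ℝ) 1) (hB : B ∈ Set.Icc (0 : ℝ) 1) (hAB : γ ^ 2 ≤ A * B)
    {u v w X : ℝ} (hw0 : 0 ≤ w)
    (hbessel : v ^ 2 ≤ (1 - γ ^ 2) * (X - u ^ 2)) (hw : w ≤ (1 - γ ^ 2) * u + γ * v) :
    (1 - A) / (1 - γ ^ 2) ^ 2 * v ^ 2 + (1 - B) / (1 - γ ^ 2) ^ 2 * w ^ 2 ≤ X := by
  obtain ⟨hA0, hA1⟩ := hA
  obtain ⟨hB0, hB1⟩ := hB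
  set s := 1 - γ ^ 2
  have hs0 : 0 < s := by nlinarith
  have key : (1 - A) * v ^ 2 + (1 - B) * (s * u + γ * v) ^ 2 ≤ s ^ 2 * u ^ 2 + s * v ^ 2 := by
    rcases hB0.lt_or_eq with hB | rfl
    · have hD : 0 ≤ B * (B * s ^ 2 * u ^ 2 - 2 * (1 - B) * s * γ * u * v
          + (A - (2 - B) * γ ^ 2) * v ^ 2) := by
        nlinarith [sq_nonneg (B * s * u - (1 - B) * γ * v),
          mul_nonneg (sub_nonneg.2 hAB) (sq_nonneg v)]
      nlinarith [nonneg_of_mul_nonneg_right hD hB]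
    · have hγ : γ = 0 := by nlinarith
      subst hγ
      nlinarith
  have hw2 : w ^ 2 ≤ (s * u + γ * v) ^ 2 := pow_le_pow_left₀ hw0 hw 2
  rw [div_mul_eq_mul_div, div_mul_eq_mul_div, ← add_div, div_le_iff₀ (by positivity)]
  nlinarith [mul_le_mul_of_nonneg_left hw2 (sub_nonneg.mpr hB1)]

section
variable {ι : Type*} [Fintype ι] [DecidableEq ι] {ψU ψV : ι → ℂ}
  (hψU : star ψU ⬝ᵥ ψU = 1) (hψV : star ψV ⬝ᵥ ψV = 1)
include hψU hψV

theorem inconclusive_bounds_of_unambiguous {FU FV : Matrix ι ι ℂ} (hFU : FU.PosSemidef)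
    (hFV : FV.PosSemidef) (hQ : (1 - FU - FV).PosSemidef)
    (hUV : star ψV ⬝ᵥ FU *ᵥ ψV = 0) (hVU : star ψU ⬝ᵥ FV *ᵥ ψU = 0) :
    1 - (star ψU ⬝ᵥ FU *ᵥ ψU).re ∈ Set.Icc 0 1 ∧ 1 - (star ψV ⬝ᵥ FV *ᵥ ψV).re ∈ Set.Icc 0 1 ∧
      ‖star ψU ⬝ᵥ ψV‖ ^ 2 ≤ (1 - (star ψU ⬝ᵥ FU *ᵥ ψU).re) * (1 - (star ψV ⬝ᵥ FV *ᵥ ψV).re) := by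
  have hFUV : FU *ᵥ ψV = 0 := (hFU.dotProduct_mulVec_zero_iff ψV).mp hUV
  have hFVU : FV *ᵥ ψU = 0 := (hFV.dotProduct_mulVec_zero_iff ψU).mp hVU
  have hFV' : star ψU ⬝ᵥ FV *ᵥ ψV = 0 := by
    rw [dotProduct_mulVec, ← hFV.1, ← star_mulVec, hFVU, star_zero, zero_dotProduct]
  have hQUV : star ψU ⬝ᵥ (1 - FU - FV) *ᵥ ψV = star ψU ⬝ᵥ ψV := by
    simp [sub_mulVec, dotProduct_sub, hFUV, hFV']
  have hQUU : star ψU ⬝ᵥ (1 - FU - FV) *ᵥ ψU = 1 - star ψU ⬝ᵥ FU *ᵥ ψU := by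
    simp [sub_mulVec, dotProduct_sub, hψU, hVU]
  have hQVV : star ψV ⬝ᵥ (1 - FU - FV) *ᵥ ψV = 1 - star ψV ⬝ᵥ FV *ᵥ ψV := by
    simp [sub_mulVec, dotProduct_sub, hψV, hUV]
  have hcs := hQ.norm_sq_dotProduct_mulVec_le ψU ψV
  have hQU := hQ.re_dotProduct_nonneg ψU
  have hQV := hQ.re_dotProduct_nonneg ψV
  rw [hQUV, hQUU, hQVV, Complex.sub_re, Complex.one_re] at hcs
  rw [hQUU] at hQU
  rw [hQVV] at hQV
  have hpU := hFU.re_dotProduct_nonneg ψU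
  have hpV := hFV.re_dotProduct_nonneg ψV
  exact ⟨⟨by simpa using hQU, by simpa using hpU⟩, ⟨by simpa using hQV, by simpa using hpV⟩, hcs⟩

theorem exists_unambiguous_of_sq_le_mul (hover : ‖star ψU ⬝ᵥ ψV‖ < 1) {A B : ℝ}
    (hA : A ∈ Set.Icc (0 : ℝ) 1) (hB : B ∈ Set.Icc (0 : ℝ) 1)
    (hAB : ‖star ψU ⬝ᵥ ψV‖ ^ 2 ≤ A * B) :
    ∃ FU FV : Matrix ι ι ℂ, FU.PosSemidef ∧ FV.PosSemidef ∧ (1 - FU - FV).PosSemidef ∧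
      star ψV ⬝ᵥ FU *ᵥ ψV = 0 ∧ star ψU ⬝ᵥ FV *ᵥ ψU = 0 ∧
      (star ψU ⬝ᵥ FU *ᵥ ψU).re = 1 - A ∧ (star ψV ⬝ᵥ FV *ᵥ ψV).re = 1 - B := by
  set γ := ‖star ψU ⬝ᵥ ψV‖
  set f := perpComponent ψV ψU
  set g := perpComponent ψU ψV
  have hs : 0 < 1 - γ ^ 2 := by nlinarith [norm_nonneg (star ψU ⬝ᵥ ψV)]
  have hfU : star f ⬝ᵥ ψU = ((1 - γ ^ 2 : ℝ) : ℂ) := by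
    rw [star_perpComponent_dotProduct_self, hψU, norm_star_dotProduct_comm, Complex.ofReal_sub,
      Complex.ofReal_one]
  have hgV : star g ⬝ᵥ ψV = ((1 - γ ^ 2 : ℝ) : ℂ) := by
    rw [star_perpComponent_dotProduct_self, hψV, Complex.ofReal_sub, Complex.ofReal_one]
  have hff : (star f ⬝ᵥ f).re = 1 - γ ^ 2 := by
    rw [star_perpComponent_dotProduct_perpComponent hψV, hψU, norm_star_dotProduct_comm,
      Complex.sub_re, Complex.one_re, Complex.ofReal_re]
  have hcU : 0 ≤ (1 - A) / (1 - γ ^ 2) ^ 2 := div_nonneg (sub_nonneg.2 hA.2) (sq_nonneg _)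
  have hcV : 0 ≤ (1 - B) / (1 - γ ^ 2) ^ 2 := div_nonneg (sub_nonneg.2 hB.2) (sq_nonneg _)
  have hFU := (posSemidef_vecMulVec_self_star f).smul hcU
  have hFV := (posSemidef_vecMulVec_self_star g).smul hcV
  refine ⟨_, _, hFU, hFV, ?_, ?_, ?_, ?_, ?_⟩
  · rw [sub_sub]
    refine posSemidef_one_sub_of_re_le (hFU.add hFV).1 fun x => ?_
    rw [add_mulVec, dotProduct_add, Complex.add_re, star_dotProduct_smul_vecMulVec_mulVec,
      star_dotProduct_smul_vecMulVec_mulVec, Complex.ofReal_re, Complex.ofReal_re]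
    have hbessel : ‖star f ⬝ᵥ x‖ ^ 2 ≤ (star f ⬝ᵥ f).re * ((star x ⬝ᵥ x).re - ‖star ψV ⬝ᵥ x‖ ^ 2) :=
      norm_sq_dotProduct_le_of_orthogonal hψV (star_perpComponent_dotProduct_eq_zero hψV ψU) x
    rw [hff] at hbessel
    exact weighted_sq_add_le_of_bessel (norm_nonneg _) hover hA hB hAB (norm_nonneg _) hbessel
      (norm_star_perpComponent_dotProduct_le hover.le x)
  · rw [star_dotProduct_smul_vecMulVec_mulVec, star_perpComponent_dotProduct_eq_zero hψV]
    simp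
  · rw [star_dotProduct_smul_vecMulVec_mulVec, star_perpComponent_dotProduct_eq_zero hψU]
    simp
  · rw [star_dotProduct_smul_vecMulVec_mulVec, hfU, Complex.ofReal_re, Complex.norm_real,
      Real.norm_of_nonneg hs.le]
    field_simp
  · rw [star_dotProduct_smul_vecMulVec_mulVec, hgV, Complex.ofReal_re, Complex.norm_real,
      Real.norm_of_nonneg hs.le]
    field_simp

end

def failureValues (γ ηU ηV : ℝ) : Set ℝ :=
  {x | ∃ A B : ℝ, A ∈ Set.Icc 0 1 ∧ B ∈ Set.Icc 0 1 ∧ γ ^ 2 ≤ A * B ∧ x = ηU * A + ηV * B}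

def failureProbabilities {ι : Type*} [Fintype ι] [DecidableEq ι] (ψU ψV : ι → ℂ) (ηU ηV : ℝ) :
    Set ℝ :=
  {x : ℝ | ∃ FU FV : Matrix ι ι ℂ,
    FU.PosSemidef ∧ FV.PosSemidef ∧ (1 - FU - FV).PosSemidef ∧
    star ψV ⬝ᵥ FU.mulVec ψV = 0 ∧ star ψU ⬝ᵥ FV.mulVec ψU = 0 ∧
    x = 1 - ηU * (star ψU ⬝ᵥ FU.mulVec ψU).re - ηV * (star ψV ⬝ᵥ FV.mulVec ψV).re}

theorem failureProbabilities_eq {ι : Type*} [Fintype ι] [DecidableEq ι] {ψU ψV : ι → ℂ}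
    (hψU : star ψU ⬝ᵥ ψU = 1) (hψV : star ψV ⬝ᵥ ψV = 1) (hover : ‖star ψU ⬝ᵥ ψV‖ < 1)
    {ηU ηV : ℝ} (hsum : ηU + ηV = 1) :
    failureProbabilities ψU ψV ηU ηV = failureValues ‖star ψU ⬝ᵥ ψV‖ ηU ηV := by
  ext x
  constructor
  · rintro ⟨FU, FV, hFU, hFV, hQ, hUV, hVU, rfl⟩
    obtain ⟨hA, hB, hAB⟩ := inconclusive_bounds_of_unambiguous hψU hψV hFU hFV hQ hUV hVU
    exact ⟨_, _, hA, hB, hAB, by linear_combination -hsum⟩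
  · rintro ⟨A, B, hA, hB, hAB, rfl⟩
    obtain ⟨FU, FV, hFU, hFV, hQ, hUV, hVU, hpU, hpV⟩ :=
      exists_unambiguous_of_sq_le_mul hψU hψV hover hA hB hAB
    exact ⟨FU, FV, hFU, hFV, hQ, hUV, hVU, by rw [hpU, hpV]; linear_combination hsum⟩

theorem isLeast_failureValues_of_le_sqrt {γ ηU ηV : ℝ} (hV0 : 0 < ηV) (hUV : ηV ≤ ηU)
    (hγ0 : 0 ≤ γ) (hγ : γ ≤ √(ηV / ηU)) :
    IsLeast (failureValues γ ηU ηV) (2 * √(ηU * ηV) * γ) := by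
  have hU0 : 0 < ηU := hV0.trans_le hUV
  set r := √(ηU * ηV) with hr
  have hr2 : r ^ 2 = ηU * ηV := Real.sq_sqrt (by positivity)
  have hr0 : 0 ≤ r := Real.sqrt_nonneg _
  have hγr : γ * r ≤ ηV := by
    calc γ * r ≤ √(ηV / ηU) * r := by gcongr
      _ = ηV := by
        rw [hr, ← Real.sqrt_mul (by positivity), show ηV / ηU * (ηU * ηV) = ηV ^ 2 by field_simp,
          Real.sqrt_sq hV0.le]
  refine ⟨⟨γ * r / ηU, γ * r / ηV, ⟨by positivity, ?_⟩, ⟨by positivity, ?_⟩, ?_, ?_⟩, ?_⟩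
  · rw [div_le_one hU0]; linarith
  · rw [div_le_one hV0]; exact hγr
  · field_simp; rw [hr2, mul_assoc]
  · field_simp; ring
  · rintro x ⟨A, B, ⟨hA0, -⟩, ⟨hB0, -⟩, hAB, rfl⟩
    have hsq : (2 * r * γ) ^ 2 ≤ (ηU * A + ηV * B) ^ 2 := by
      nlinarith [sq_nonneg (ηU * A - ηV * B),
        mul_le_mul_of_nonneg_left hAB (by positivity : 0 ≤ 4 * ηU * ηV)]
    nlinarith [mul_nonneg hU0.le hA0, mul_nonneg hV0.le hB0, mul_nonneg hr0 hγ0]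

theorem isLeast_failureValues_of_sqrt_le {γ ηU ηV : ℝ} (hV0 : 0 < ηV) (hU0 : 0 < ηU)
    (hγ1 : γ ≤ 1) (hγ : √(ηV / ηU) ≤ γ) :
    IsLeast (failureValues γ ηU ηV) (ηV + ηU * γ ^ 2) := by
  have hVU : ηV ≤ ηU * γ ^ 2 := by
    have := pow_le_pow_left₀ (Real.sqrt_nonneg _) hγ 2
    rw [Real.sq_sqrt (by positivity), div_le_iff₀ hU0] at this
    linarith
  refine ⟨⟨γ ^ 2, 1, ⟨sq_nonneg γ, ?_⟩, ⟨zero_le_one, le_rfl⟩, by rw [mul_one], by ring⟩, ?_⟩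
  · nlinarith [(Real.sqrt_nonneg _).trans hγ]
  · rintro x ⟨A, B, ⟨hA0, -⟩, ⟨hB0, hB1⟩, hAB, rfl⟩
    have hB : 0 < B := by
      rcases hB0.lt_or_eq with hB | rfl
      · exact hB
      · nlinarith
    have key : 0 ≤ (1 - B) * (ηU * γ ^ 2 - ηV * B) := by
      apply mul_nonneg (by linarith); nlinarith
    nlinarith [mul_le_mul_of_nonneg_left hAB hU0.le]

theorem stmt15 {n : ℕ} (ψU ψV : Fin n → ℂ)
    (hψU : star ψU ⬝ᵥ ψU = 1) (hψV : star ψV ⬝ᵥ ψV = 1)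
    (hover : ‖star ψU ⬝ᵥ ψV‖ < 1)
    (ηU ηV : ℝ) (hV0 : 0 < ηV) (hUV : ηV ≤ ηU) (hsum : ηU + ηV = 1) :
    (‖star ψU ⬝ᵥ ψV‖ ≤ Real.sqrt (ηV / ηU) →
      IsLeast {x : ℝ | ∃ FU FV : Matrix (Fin n) (Fin n) ℂ,
          FU.PosSemidef ∧ FV.PosSemidef ∧ (1 - FU - FV).PosSemidef ∧
          star ψV ⬝ᵥ FU.mulVec ψV = 0 ∧ star ψU ⬝ᵥ FV.mulVec ψU = 0 ∧
          x = 1 - ηU * (star ψU ⬝ᵥ FU.mulVec ψU).re - ηV * (star ψV ⬝ᵥ FV.mulVec ψV).re}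
        (2 * Real.sqrt (ηU * ηV) * ‖star ψU ⬝ᵥ ψV‖)) ∧
    (Real.sqrt (ηV / ηU) ≤ ‖star ψU ⬝ᵥ ψV‖ →
      IsLeast {x : ℝ | ∃ FU FV : Matrix (Fin n) (Fin n) ℂ,
          FU.PosSemidef ∧ FV.PosSemidef ∧ (1 - FU - FV).PosSemidef ∧
          star ψV ⬝ᵥ FU.mulVec ψV = 0 ∧ star ψU ⬝ᵥ FV.mulVec ψU = 0 ∧
          x = 1 - ηU * (star ψU ⬝ᵥ FU.mulVec ψU).re - ηV * (star ψV ⬝ᵥ FV.mulVec ψV).re}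
        (ηV + ηU * ‖star ψU ⬝ᵥ ψV‖ ^ 2)) := by
  show (_ → IsLeast (failureProbabilities ψU ψV ηU ηV) _) ∧
    (_ → IsLeast (failureProbabilities ψU ψV ηU ηV) _)
  rw [failureProbabilities_eq hψU hψV hover hsum]
  exact ⟨isLeast_failureValues_of_le_sqrt hV0 hUV (norm_nonneg _),
    isLeast_failureValues_of_sqrt_le hV0 (hV0.trans_le hUV) hover.le⟩
end
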